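/- arXiv:1409.2920 — 7 statements merged into one kernel-verified Lean document; each statement's English description precedes it below -/
import Mathlib

section
/- Fix a ∈ I_0 and γ ∈ ℤ_{>0}. Let (ν, J) be a rigged configuration such that m_i^{(a)} = 0 for all i ∉ γℤ and every rigging x ∈ J_i^{(a)} satisfies x ∈ γℤ. If f_a acts on the string (ℓ, x_ℓ) of (ν,J)^{(a)} (i.e., (ℓ, x_ℓ) is the longest string whose label equals the minimal label x_ℓ), then for every 1 ≤ k ≤ γ, the k-fold application f_a^k sends (ℓ, x_ℓ) to the string (ℓ + k, x_ℓ − k); moreover f_a^γ(ν, J) again has m_i^{(a)} = 0 for i ∉ γℤ and all riggings in J_i^{(a)} divisible by γ. -/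
open scoped Classical

/-- The crystal operator `f_a` on a single rigged partition `(ν,J)^{(a)}`,
encoded as a multiset of strings `(length, label)`.  Let `x` be the smallest
label.  If `x > 0` (or the rigged partition is empty), a new string `(1, −1)` is
added.  Otherwise, let `ℓ` be the maximal length of a string with label `x`;
the string `(ℓ, x)` is replaced by `(ℓ+1, x−1)`, and all other labels are
changed so that all colabels remain fixed: labels of strings of length
`≥ ℓ + 1` decrease by `2` and labels of strings of length `≤ ℓ` are unchanged. -/
noncomputable def fString (R : Multiset (ℕ × ℤ)) : Multiset (ℕ × ℤ) :=
  let x := sInf {y : ℤ | ∃ i, (i, y) ∈ R}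
  if R = 0 ∨ 0 < x then (1, -1) ::ₘ R
  else
    let l := sSup {i : ℕ | (i, x) ∈ R}
    (l + 1, x - 1) ::ₘ
      (R.erase (l, x)).map (fun p => if l + 1 ≤ p.1 then (p.1, p.2 - 2) else p)

private lemma labelSet_bddBelow (M : Multiset (ℕ × ℤ)) :
    BddBelow {y : ℤ | ∃ i, (i, y) ∈ M} := by
  apply Set.Finite.bddBelow
  apply Set.Finite.subset (Multiset.toFinset (M.map Prod.snd)).finite_toSet
  rintro y ⟨i, hi⟩
  simp only [Multiset.mem_toFinset, Multiset.mem_map, Finset.mem_coe]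
  exact ⟨(i, y), hi, rfl⟩

private lemma lengthSet_bddAbove (M : Multiset (ℕ × ℤ)) (c : ℤ) :
    BddAbove {i : ℕ | (i, c) ∈ M} := by
  apply Set.Finite.bddAbove
  apply Set.Finite.subset (Multiset.toFinset (M.map Prod.fst)).finite_toSet
  intro i hi
  simp only [Multiset.mem_toFinset, Multiset.mem_map, Finset.mem_coe]
  exact ⟨(i, c), hi, rfl⟩

private lemma fString_eq (M : Multiset (ℕ × ℤ)) (c : ℤ) (m : ℕ)
    (hmem : (m, c) ∈ M) (hc0 : c ≤ 0)
    (hmin : ∀ p ∈ M, c ≤ p.2)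
    (hmax : ∀ i, (i, c) ∈ M → i ≤ m) :
    fString M = (m + 1, c - 1) ::ₘ
      (M.erase (m, c)).map (fun p => if m + 1 ≤ p.1 then (p.1, p.2 - 2) else p) := by
  have hne : M ≠ 0 := by rintro rfl; simp at hmem
  have hxeq : sInf {y : ℤ | ∃ i, (i, y) ∈ M} = c := by
    refine le_antisymm (csInf_le (labelSet_bddBelow M) ⟨m, hmem⟩) (le_csInf ⟨c, m, hmem⟩ ?_)
    rintro y ⟨i, hi⟩
    exact hmin _ hi
  have hleq : sSup {i : ℕ | (i, c) ∈ M} = m :=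
    le_antisymm (csSup_le ⟨m, hmem⟩ hmax) (le_csSup (lengthSet_bddAbove M c) hmem)
  simp only [fString, hxeq, hleq]
  rw [if_neg]
  push_neg
  exact ⟨hne, hc0⟩

/-- Fix `γ ∈ ℤ_{>0}` and a rigged partition `(ν,J)^{(a)}` all of whose string
lengths and labels are divisible by `γ`.  If `f_a` acts on the string
`(ℓ, x_ℓ)` (the longest string whose label is the minimal label `x_ℓ ≤ 0`),
then for every `1 ≤ k ≤ γ` the iterate `f_a^k` sends `(ℓ, x_ℓ)` to the string
`(ℓ + k, x_ℓ − k)`; moreover after `γ` applications all string lengths and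
labels are again divisible by `γ`. -/
theorem fString_pow_same_string (γ : ℕ) (hγ : 0 < γ) (R : Multiset (ℕ × ℤ))
    (hdiv : ∀ p ∈ R, γ ∣ p.1 ∧ (γ : ℤ) ∣ p.2) (hne : R ≠ 0)
    (x : ℤ) (hx : x = sInf {y : ℤ | ∃ i, (i, y) ∈ R}) (hx0 : x ≤ 0)
    (l : ℕ) (hl : l = sSup {i : ℕ | (i, x) ∈ R}) :
    (∀ k : ℕ, 1 ≤ k → k ≤ γ → (l + k, x - k) ∈ fString^[k] R) ∧
      (∀ p ∈ fString^[γ] R, γ ∣ p.1 ∧ (γ : ℤ) ∣ p.2) := by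
  -- basic facts
  have hRne : {y : ℤ | ∃ i, (i, y) ∈ R}.Nonempty := by
    obtain ⟨p, hp⟩ := Multiset.exists_mem_of_ne_zero hne
    exact ⟨p.2, p.1, hp⟩
  have hxmem : ∃ i, (i, x) ∈ R := by
    rw [hx]; exact Int.csInf_mem hRne (labelSet_bddBelow R)
  have hxmin : ∀ p ∈ R, x ≤ p.2 := by
    intro p hp
    rw [hx]
    exact csInf_le (labelSet_bddBelow R) ⟨p.1, hp⟩
  have hlmem : (l, x) ∈ R := by
    rw [hl]; exact Nat.sSup_mem hxmem (lengthSet_bddAbove R x)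
  have hlmax : ∀ i, (i, x) ∈ R → i ≤ l := by
    intro i hi
    rw [hl]; exact le_csSup (lengthSet_bddAbove R x) hi
  have hγl : γ ∣ l := (hdiv _ hlmem).1
  have hγx : (γ : ℤ) ∣ x := (hdiv _ hlmem).2
  -- facts about long strings
  have factC : ∀ p ∈ R, l + 1 ≤ p.1 → l + γ ≤ p.1 := by
    intro p hp h1
    have hd : γ ∣ p.1 - l := Nat.dvd_sub (hdiv _ hp).1 hγl
    have := Nat.le_of_dvd (by omega) hd
    omega
  have factA : ∀ p ∈ R, l + 1 ≤ p.1 → x + γ ≤ p.2 := by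
    intro p hp h1
    have hne2 : p.2 ≠ x := by
      intro h
      have : (p.1, x) ∈ R := by rw [← h]; exact hp
      have := hlmax p.1 this
      omega
    have hge : x ≤ p.2 := hxmin p hp
    have hd : (γ : ℤ) ∣ p.2 - x := dvd_sub (hdiv _ hp).2 hγx
    have := Int.le_of_dvd (by omega) hd
    omega
  -- the key closed formula
  have key : ∀ k : ℕ, k ≤ γ → fString^[k] R = (l + k, x - k) ::ₘ
      (R.erase (l, x)).map
        (fun p => if l + 1 ≤ p.1 then (p.1, p.2 - 2 * k) else p) := by
    intro k
    induction k with
    | zero =>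
      intro _
      simp only [Function.iterate_zero_apply, Nat.cast_zero, add_zero, sub_zero, mul_zero]
      rw [show (fun p : ℕ × ℤ => if l + 1 ≤ p.1 then (p.1, p.2) else p) = id by
          funext p; by_cases h : l + 1 ≤ p.1 <;> simp [h]]
      rw [Multiset.map_id, Multiset.cons_erase hlmem]
    | succ k ih =>
      intro hk1
      have hkγ : k ≤ γ := by omega
      rw [Function.iterate_succ_apply', ih hkγ]
      rw [fString_eq _ (x - k) (l + k) (Multiset.mem_cons_self _ _)
        (by push_cast; omega)
        ?_ ?_]
      · rw [Multiset.erase_cons_head, Multiset.map_map]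
        congr 1
        · simp only [Prod.mk.injEq]
          refine ⟨by omega, by push_cast; ring⟩
        · refine Multiset.map_congr rfl ?_
          intro q hq
          have hqR : q ∈ R := Multiset.mem_of_mem_erase hq
          by_cases h1 : l + 1 ≤ q.1
          · have h2 : l + γ ≤ q.1 := factC q hqR h1
            simp only [Function.comp_apply, h1, if_true]
            have h3 : l + k + 1 ≤ q.1 := by omega
            simp only [h3, if_true, h1]
            simp only [Prod.mk.injEq]
            refine ⟨trivial, by push_cast; ring⟩
          · simp only [Function.comp_apply, h1, if_false]
            have h3 : ¬ (l + k + 1 ≤ q.1) := by omega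
            simp only [h3, if_false]
      · -- min label
        intro p hp
        rcases Multiset.mem_cons.1 hp with h | h
        · rw [h]
        · obtain ⟨q, hq, rfl⟩ := Multiset.mem_map.1 h
          have hqR : q ∈ R := Multiset.mem_of_mem_erase hq
          by_cases h1 : l + 1 ≤ q.1
          · have := factA q hqR h1
            simp only [h1, if_true]
            push_cast
            omega
          · have := hxmin q hqR
            simp only [h1, if_false]
            omega
      · -- max length with given label
        intro i hi
        rcases Multiset.mem_cons.1 hi with h | h
        · have := congrArg Prod.fst h
          simp only at this
          omega
        · obtain ⟨q, hq, heq⟩ := Multiset.mem_map.1 h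
          have hqR : q ∈ R := Multiset.mem_of_mem_erase hq
          by_cases h1 : l + 1 ≤ q.1
          · have hA := factA q hqR h1
            simp only [h1, if_true, Prod.mk.injEq] at heq
            omega
          · simp only [h1, if_false] at heq
            have hx2 : x ≤ q.2 := hxmin q hqR
            have hq2 : q.2 = x - k := by rw [heq]
            have hk0 : (k : ℤ) = 0 := by omega
            have hk0' : k = 0 := by exact_mod_cast hk0
            subst hk0'
            have hiq : (i, x) ∈ R := by
              have hqix : q = (i, x) := by rw [heq]; simp
              rw [← hqix]; exact hqR
            have := hlmax i hiq
            omega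
  constructor
  · intro k hk1 hk2
    rw [key k hk2]
    exact Multiset.mem_cons_self _ _
  · rw [key γ le_rfl]
    intro p hp
    rcases Multiset.mem_cons.1 hp with h | h
    · subst h
      exact ⟨Dvd.dvd.add hγl dvd_rfl, dvd_sub hγx dvd_rfl⟩
    · obtain ⟨q, hq, rfl⟩ := Multiset.mem_map.1 h
      have hqR : q ∈ R := Multiset.mem_of_mem_erase hq
      by_cases h1 : l + 1 ≤ q.1
      · simp only [h1, if_true]
        exact ⟨(hdiv _ hqR).1, dvd_sub (hdiv _ hqR).2 (Dvd.dvd.mul_left dvd_rfl 2)⟩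
      · simp only [h1, if_false]
        exact hdiv _ hqR
end

section
/- Let λ be a partition contained in an r × s rectangle obtained by removing vertical dominoes (so every column of the complement λ̄ in the r × s rectangle has even length, equivalently r − λ'_j is even for each column index j, where λ' is the conjugate). Then the sequence of partitions ν^{(a)} defined by ν^{(a)} = λ̄^{[r−a]} (λ̄ with its first r−a rows removed) for 1 ≤ a < r, ν^{(a)} = λ̄ for r ≤ a < n−1, and ν^{(a)} = λ̄^{1/2} (halving all row multiplicities) for a = n−1, n, satisfies the type D_n (r < n−1) configuration equation: Σ_{a∈I_0} |ν^{(a)}| α_a = s·ϖ_r − λ, where weights and roots are expressed in the ℤ^n realization ε-coordinates (α_a = ε_a − ε_{a+1} for a < n, α_n = ε_{n-1} + ε_n, ϖ_a = ε_1 + ⋯ + ε_a for a ≤ n−2). -/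
/-- The `a`-th simple root of type `Dₙ` in the `ℤⁿ` realization, 0-indexed
(index `k` corresponds to the simple root `α_{k+1}` of the paper). -/
def alphaD (n : ℕ) (a : Fin n) : Fin n → ℤ := fun j =>
  if a.val + 1 < n then (if j = a then 1 else if j.val = a.val + 1 then -1 else 0)
  else (if j.val = n - 1 ∨ j.val = n - 2 then 1 else 0)

/-- The number of boxes `|ν^{(a)}|` of the highest weight rigged configuration of
`RC(B^{r,s}; λ)` in type `Dₙ⁽¹⁾` (`r < n−1`), where `λ` is a partition inside the
`r × s` rectangle (rows `lam 0 ≥ lam 1 ≥ ⋯`), `λ̄` its complement in the rectangle: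
`ν^{(a)} = λ̄^{[r−a]}` for `a < r`, `ν^{(a)} = λ̄` for `r ≤ a < n−1`, and
`ν^{(a)} = λ̄^{1/2}` for `a = n−1, n` (1-indexed `a = k+1`). -/
def nuSizeD (n r s : ℕ) (lam : Fin r → ℕ) (k : Fin n) : ℕ :=
  if k.val + 1 < r then
    ∑ i ∈ Finset.univ.filter (fun i : Fin r => i.val < k.val + 1), (s - lam i)
  else if k.val + 1 ≤ n - 2 then ∑ i : Fin r, (s - lam i)
  else (∑ i : Fin r, (s - lam i)) / 2

set_option maxHeartbeats 1000000 in
/-- Weight-balance identity for the highest weight rigged configuration of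
`B^{r,s}` in type `Dₙ⁽¹⁾`, `1 ≤ r < n−1`: if `λ` is obtained from the `r × s`
rectangle by removing vertical dominoes (every column of the complement `λ̄` has
even height), then `Σ_{a ∈ I₀} |ν^{(a)}| α_a = s·ϖ_r − λ` in the `ℤⁿ` realization,
where `ϖ_r = ε_1 + ⋯ + ε_r`. -/
theorem configD_weight (n r s : ℕ) (hn : 4 ≤ n) (hr1 : 1 ≤ r) (hr : r + 1 < n)
    (lam : Fin r → ℕ) (hanti : Antitone lam) (hbox : ∀ i, lam i ≤ s)
    (heven : ∀ j : ℕ, 1 ≤ j → j ≤ s →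
      Even (Finset.univ.filter (fun i : Fin r => j ≤ s - lam i)).card) :
    ∀ j : Fin n,
      (∑ k : Fin n, (nuSizeD n r s lam k : ℤ) * alphaD n k j) =
        (s : ℤ) * (if j.val < r then 1 else 0) -
          (if h : j.val < r then (lam ⟨j.val, h⟩ : ℤ) else 0) := by
  intro j
  have hlast : n - 1 < n := by omega
  -- the total number of boxes in the complement is even
  have hNeven : 2 ∣ ∑ i : Fin r, (s - lam i) := by
    have hform : (∑ i : Fin r, (s - lam i))
        = ∑ m ∈ Finset.Icc 1 s,
            (Finset.univ.filter (fun i : Fin r => m ≤ s - lam i)).card := by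
      calc ∑ i : Fin r, (s - lam i)
          = ∑ i : Fin r, ∑ m ∈ Finset.Icc 1 s, (if m ≤ s - lam i then 1 else 0) := by
            refine Finset.sum_congr rfl fun i _ => ?_
            have hfe : (Finset.Icc 1 s).filter (fun m => m ≤ s - lam i)
                = Finset.Icc 1 (s - lam i) := by
              ext m
              simp only [Finset.mem_filter, Finset.mem_Icc]
              omega
            rw [← Finset.card_filter, hfe, Nat.card_Icc]; omega
          _ = ∑ m ∈ Finset.Icc 1 s, ∑ i : Fin r, (if m ≤ s - lam i then 1 else 0) :=
            Finset.sum_comm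
          _ = ∑ m ∈ Finset.Icc 1 s,
              (Finset.univ.filter (fun i : Fin r => m ≤ s - lam i)).card := by
            refine Finset.sum_congr rfl fun m _ => (Finset.card_filter _ _).symm
    rw [hform]
    refine Finset.dvd_sum fun m hm => ?_
    rw [Finset.mem_Icc] at hm
    exact (heven m hm.1 hm.2).two_dvd
  set nu : Fin n → ℕ := nuSizeD n r s lam with hnu
  have key : (∑ k : Fin n, (nu k : ℤ) * alphaD n k j)
      = (if j.val + 1 < n then (nu j : ℤ) else 0)
        - (∑ k : Fin n, if k.val + 1 = j.val then (nu k : ℤ) else 0)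
        + (if j.val = n - 1 ∨ j.val = n - 2 then (nu ⟨n - 1, hlast⟩ : ℤ) else 0) := by
    have hpt : ∀ k : Fin n, (nu k : ℤ) * alphaD n k j
        = (if k = j then (if j.val + 1 < n then (nu k : ℤ) else 0) else 0)
          + (-(if k.val + 1 = j.val then (nu k : ℤ) else 0))
          + (if k = ⟨n - 1, hlast⟩ then
              (if j.val = n - 1 ∨ j.val = n - 2 then (nu k : ℤ) else 0) else 0) := by
      intro k
      have hk := k.isLt
      have hj' := j.isLt
      simp only [alphaD, Fin.ext_iff]
      split_ifs
      any_goals ring1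
      all_goals omega
    rw [Finset.sum_congr rfl fun k _ => hpt k, Finset.sum_add_distrib,
      Finset.sum_add_distrib, Finset.sum_neg_distrib]
    rw [Finset.sum_ite_eq', Finset.sum_ite_eq']
    simp only [Finset.mem_univ, if_true]
    ring
  rw [key]
  have hjn : j.val < n := j.isLt
  -- value of nu at an explicit index
  have hval : ∀ (m : ℕ) (hm : m < n), nu ⟨m, hm⟩
      = (if m + 1 < r then
          ∑ i ∈ Finset.univ.filter (fun i : Fin r => i.val < m + 1), (s - lam i)
        else if m + 1 ≤ n - 2 then ∑ i : Fin r, (s - lam i)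
        else (∑ i : Fin r, (s - lam i)) / 2) := fun m hm => rfl
  -- the middle sum
  have hmid : (∑ k : Fin n, if k.val + 1 = j.val then (nu k : ℤ) else 0)
      = if h : 0 < j.val then (nu ⟨j.val - 1, by omega⟩ : ℤ) else 0 := by
    by_cases h0 : 0 < j.val
    · rw [dif_pos h0]
      have hjj : j.val - 1 < n := by omega
      have hcongr : ∀ k : Fin n, (if k.val + 1 = j.val then (nu k : ℤ) else 0)
          = (if k = ⟨j.val - 1, hjj⟩ then (nu k : ℤ) else 0) := by
        intro k
        by_cases hk : k.val + 1 = j.val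
        · rw [if_pos hk, if_pos (by apply Fin.ext; simp; omega)]
        · rw [if_neg hk, if_neg (by intro hkk; apply hk; rw [hkk]; simp; omega)]
      rw [Finset.sum_congr rfl fun k _ => hcongr k, Finset.sum_ite_eq']
      simp
    · rw [dif_neg h0]
      exact Finset.sum_eq_zero fun k _ => if_neg (by omega)
  rw [hmid]
  -- telescoping for partial sums
  have htel : ∀ (m : ℕ) (hm : m < r),
      (∑ i ∈ Finset.univ.filter (fun i : Fin r => i.val < m + 1), (s - lam i))
        = (∑ i ∈ Finset.univ.filter (fun i : Fin r => i.val < m), (s - lam i))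
          + (s - lam ⟨m, hm⟩) := by
    intro m hm
    have hins : Finset.univ.filter (fun i : Fin r => i.val < m + 1)
        = insert (⟨m, hm⟩ : Fin r) (Finset.univ.filter (fun i : Fin r => i.val < m)) := by
      ext i
      simp only [Finset.mem_filter, Finset.mem_insert, Finset.mem_univ, true_and, Fin.ext_iff]
      omega
    rw [hins, Finset.sum_insert (by simp)]
    ring
  have hfull : ∀ m : ℕ, r ≤ m →
      Finset.univ.filter (fun i : Fin r => i.val < m) = Finset.univ := by
    intro m hm
    refine Finset.filter_true_of_mem fun i _ => ?_
    have := i.isLt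
    omega
  have hj_eq : (⟨j.val, hjn⟩ : Fin n) = j := Fin.ext rfl
  rcases Nat.lt_or_ge j.val r with hcase | hcase
  · -- j.val < r : RHS is s - λ_j
    rw [if_pos hcase, dif_pos hcase]
    rw [if_pos (show j.val + 1 < n by omega),
      if_neg (show ¬(j.val = n - 1 ∨ j.val = n - 2) by omega), add_zero]
    have hcur : nu j
        = ∑ i ∈ Finset.univ.filter (fun i : Fin r => i.val < j.val + 1), (s - lam i) := by
      conv_lhs => rw [← hj_eq]
      rw [hval]
      by_cases h2 : j.val + 1 < r
      · rw [if_pos h2]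
      · rw [if_neg h2, if_pos (show j.val + 1 ≤ n - 2 by omega),
          hfull (j.val + 1) (by omega)]
    rw [hcur]
    have hb := hbox ⟨j.val, hcase⟩
    by_cases h0 : 0 < j.val
    · rw [dif_pos h0]
      have hprev : nu ⟨j.val - 1, by omega⟩
          = ∑ i ∈ Finset.univ.filter (fun i : Fin r => i.val < j.val), (s - lam i) := by
        rw [hval, if_pos (show j.val - 1 + 1 < r by omega)]
        have hjj : j.val - 1 + 1 = j.val := by omega
        simp only [hjj]
      rw [hprev, htel j.val hcase]
      push_cast [Nat.sub_add_cancel]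
      omega
    · rw [dif_neg h0]
      have hj0 : j.val = 0 := by omega
      have hzero : Finset.univ.filter (fun i : Fin r => i.val < j.val) = ∅ := by
        ext i
        simp [hj0]
      rw [htel j.val hcase, hzero, Finset.sum_empty]
      omega
  · -- r ≤ j.val : RHS is 0
    rw [if_neg (show ¬ j.val < r by omega), dif_neg (show ¬ j.val < r by omega),
      dif_pos (show 0 < j.val by omega)]
    have hprev := hval (j.val - 1) (show j.val - 1 < n by omega)
    have hlastval := hval (n - 1) hlast
    by_cases hA : j.val = n - 1
    · rw [if_neg (show ¬ j.val + 1 < n by omega),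
        if_pos (show j.val = n - 1 ∨ j.val = n - 2 from Or.inl hA)]
      rw [hprev, if_neg (show ¬ j.val - 1 + 1 < r by omega),
        if_neg (show ¬ j.val - 1 + 1 ≤ n - 2 by omega)]
      rw [hlastval, if_neg (show ¬ n - 1 + 1 < r by omega),
        if_neg (show ¬ n - 1 + 1 ≤ n - 2 by omega)]
      omega
    · by_cases hB : j.val = n - 2
      · rw [if_pos (show j.val + 1 < n by omega),
          if_pos (show j.val = n - 1 ∨ j.val = n - 2 from Or.inr hB)]
        have hcur : nu j = (∑ i : Fin r, (s - lam i)) / 2 := by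
          conv_lhs => rw [← hj_eq]
          rw [hval, if_neg (show ¬ j.val + 1 < r by omega),
            if_neg (show ¬ j.val + 1 ≤ n - 2 by omega)]
        rw [hcur]
        rw [hprev, if_neg (show ¬ j.val - 1 + 1 < r by omega),
          if_pos (show j.val - 1 + 1 ≤ n - 2 by omega)]
        rw [hlastval, if_neg (show ¬ n - 1 + 1 < r by omega),
          if_neg (show ¬ n - 1 + 1 ≤ n - 2 by omega)]
        omega
      · -- r ≤ j.val ≤ n - 3
        rw [if_pos (show j.val + 1 < n by omega),
          if_neg (show ¬(j.val = n - 1 ∨ j.val = n - 2) by omega), add_zero]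
        have hcur : nu j = ∑ i : Fin r, (s - lam i) := by
          conv_lhs => rw [← hj_eq]
          rw [hval, if_neg (show ¬ j.val + 1 < r by omega),
            if_pos (show j.val + 1 ≤ n - 2 by omega)]
        rw [hcur]
        rw [hprev, if_neg (show ¬ j.val - 1 + 1 < r by omega),
          if_pos (show j.val - 1 + 1 ≤ n - 2 by omega)]
        omega
end

section
/- Let λ be obtained from an r × s rectangle (r < n) by removing horizontal dominoes in type C_n, i.e., λ_i = s − 2k_i for nonnegative integers k_r ≥ k_{r-1} ≥ ⋯ ≥ k_1 ≥ 0, reading rows from top. Define ν^{(a)} = λ̄^{[r−a]} for 1 ≤ a < r, ν^{(a)} = λ̄ for r ≤ a < n, and ν^{(n)} = (1/2)λ̄ (each row halved). Then Σ_{a∈I_0} |ν^{(a)}| α_a = s·ϖ_r − λ in the ℤ^n realization of type C_n (α_a = ε_a − ε_{a+1} for a < n, α_n = 2ε_n, ϖ_a = ε_1 + ⋯ + ε_a). -/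
lemma sumIndic1 {m : ℕ} (g : Fin m → ℤ) (j : Fin (m+1)) :
    (∑ i : Fin m, if j = i.castSucc then g i else 0) =
      if h : j.val < m then g ⟨j.val, h⟩ else 0 := by
  by_cases h : j.val < m
  · rw [dif_pos h, Finset.sum_eq_single (⟨j.val, h⟩ : Fin m)]
    · rw [if_pos (Fin.ext (by simp))]
    · intro b _ hb
      rw [if_neg]
      intro hjb
      exact hb (Fin.ext (by simpa using (congrArg Fin.val hjb).symm))
    · simp
  · rw [dif_neg h, Finset.sum_eq_zero]
    intro i _
    rw [if_neg]
    intro hji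
    exact h (by rw [hji]; simpa using i.isLt)

lemma sumIndic2 {m : ℕ} (g : Fin m → ℤ) (j : Fin (m+1)) :
    (∑ i : Fin m, if j.val = i.val + 1 then g i else 0) =
      if h : 0 < j.val then g ⟨j.val - 1, by have := j.isLt; omega⟩ else 0 := by
  by_cases h : 0 < j.val
  · rw [dif_pos h, Finset.sum_eq_single (⟨j.val - 1, by have := j.isLt; omega⟩ : Fin m)]
    · rw [if_pos (by simp; omega)]
    · intro b _ hb
      rw [if_neg]
      intro hjb
      exact hb (Fin.ext (by simp; omega))
    · simp
  · rw [dif_neg h, Finset.sum_eq_zero]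
    intro i _
    rw [if_neg]
    omega

lemma filterStep {r : ℕ} (f : Fin r → ℕ) (c : ℕ) (h : c < r) :
    ∑ i ∈ Finset.univ.filter (fun i : Fin r => i.val < c + 1), f i
      = (∑ i ∈ Finset.univ.filter (fun i : Fin r => i.val < c), f i) + f ⟨c, h⟩ := by
  have hset : Finset.univ.filter (fun i : Fin r => i.val < c + 1)
      = insert (⟨c, h⟩ : Fin r) (Finset.univ.filter (fun i : Fin r => i.val < c)) := by
    ext i
    simp [Finset.mem_insert, Fin.ext_iff]
    omega
  rw [hset, Finset.sum_insert (by simp)]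
  ring

lemma filterFull {r : ℕ} (f : Fin r → ℕ) :
    ∑ i ∈ Finset.univ.filter (fun i : Fin r => i.val < r), f i = ∑ i : Fin r, f i := by
  congr 1
  apply Finset.filter_true_of_mem
  intro i _
  exact i.isLt


/-- The `a`-th simple root of type `Cₙ` in the `ℤⁿ` realization, 0-indexed
(index `k` corresponds to `α_{k+1}`): `α_a = ε_a − ε_{a+1}` for `a < n`,
`α_n = 2 ε_n`. -/
def alphaC (n : ℕ) (a : Fin n) : Fin n → ℤ := fun j =>
  if a.val + 1 < n then (if j = a then 1 else if j.val = a.val + 1 then -1 else 0)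
  else (if j.val = n - 1 then 2 else 0)

/-- The number of boxes `|ν^{(a)}|` of the highest weight rigged configuration of
`RC(B^{r,s}; λ)` in type `Cₙ⁽¹⁾` (`r < n`): `ν^{(a)} = λ̄^{[r−a]}` for `a < r`,
`ν^{(a)} = λ̄` for `r ≤ a < n`, and `ν^{(n)} = (1/2) λ̄` (each row halved),
where `λ̄` is the complement of `λ` in the `r × s` rectangle (1-indexed `a = k+1`). -/
def nuSizeC (n r s : ℕ) (lam : Fin r → ℕ) (k : Fin n) : ℕ :=
  if k.val + 1 < r then
    ∑ i ∈ Finset.univ.filter (fun i : Fin r => i.val < k.val + 1), (s - lam i)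
  else if k.val + 1 < n then ∑ i : Fin r, (s - lam i)
  else (∑ i : Fin r, (s - lam i)) / 2

/-- Weight-balance identity for the highest weight rigged configuration of
`B^{r,s}` in type `Cₙ⁽¹⁾`, `1 ≤ r < n`: if `λ` is obtained from the `r × s`
rectangle by removing horizontal dominoes (every row of the complement `λ̄` has
even length), then `Σ_{a ∈ I₀} |ν^{(a)}| α_a = s·ϖ_r − λ` in the `ℤⁿ`
realization of type `Cₙ`, where `ϖ_r = ε_1 + ⋯ + ε_r`. -/
theorem configC_weight (n r s : ℕ) (hn : 2 ≤ n) (hr1 : 1 ≤ r) (hr : r < n)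
    (lam : Fin r → ℕ) (hanti : Antitone lam) (hbox : ∀ i, lam i ≤ s)
    (heven : ∀ i, Even (s - lam i)) :
    ∀ j : Fin n,
      (∑ k : Fin n, (nuSizeC n r s lam k : ℤ) * alphaC n k j) =
        (s : ℤ) * (if j.val < r then 1 else 0) -
          (if h : j.val < r then (lam ⟨j.val, h⟩ : ℤ) else 0) := by
  intro j
  obtain ⟨m, rfl⟩ : ∃ m, n = m + 1 := ⟨n - 1, by omega⟩
  have hrm : r ≤ m := by omega
  have hm1 : 1 ≤ m := le_trans hr1 hrm
  set T : ℕ := ∑ i : Fin r, (s - lam i) with hT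
  have hT2 : 2 ∣ T := Finset.dvd_sum (fun i _ => (heven i).two_dvd)
  rw [Fin.sum_univ_castSucc]
  have hlast : alphaC (m+1) (Fin.last m) j = (if j.val = m then 2 else 0) := by
    simp [alphaC]
  have hmid : ∀ i : Fin m,
      (nuSizeC (m+1) r s lam i.castSucc : ℤ) * alphaC (m+1) i.castSucc j
        = (if j = i.castSucc then (nuSizeC (m+1) r s lam i.castSucc : ℤ) else 0)
          - (if j.val = i.val + 1 then (nuSizeC (m+1) r s lam i.castSucc : ℤ) else 0) := by
    intro i
    have hc : (i.castSucc).val + 1 < m + 1 := by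
      simpa using i.isLt
    simp only [alphaC]
    rw [if_pos hc]
    by_cases h1 : j = i.castSucc
    · have h2 : ¬ j.val = i.val + 1 := by rw [h1]; simp
      simp [h1, h2]
    · by_cases h2 : j.val = i.val + 1 <;> simp [h1, h2]
  rw [Finset.sum_congr rfl (fun i _ => hmid i), Finset.sum_sub_distrib,
    sumIndic1, sumIndic2, hlast]
  have hNlast : nuSizeC (m+1) r s lam (Fin.last m) = T / 2 := by
    simp only [nuSizeC, Fin.val_last]
    rw [if_neg (by omega), if_neg (by omega)]
  by_cases hA : j.val + 1 < r
  · -- case A : j.val + 1 < r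
    have hjm : j.val < m := by omega
    have hjr : j.val < r := by omega
    rw [dif_pos hjm, if_neg (show ¬ j.val = m by omega), if_pos hjr, dif_pos hjr]
    have e1 : nuSizeC (m+1) r s lam ((⟨j.val, hjm⟩ : Fin m).castSucc)
        = ∑ i ∈ Finset.univ.filter (fun i : Fin r => i.val < j.val + 1), (s - lam i) := by
      simp only [nuSizeC, Fin.castSucc_mk]
      rw [if_pos hA]
    rw [e1, filterStep (fun i => s - lam i) j.val hjr]
    by_cases h0 : 0 < j.val
    · rw [dif_pos h0]
      have e2 : nuSizeC (m+1) r s lam ((⟨j.val - 1, by omega⟩ : Fin m).castSucc)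
          = ∑ i ∈ Finset.univ.filter (fun i : Fin r => i.val < j.val), (s - lam i) := by
        simp only [nuSizeC, Fin.castSucc_mk]
        rw [if_pos (by omega)]
        have hval : j.val - 1 + 1 = j.val := by omega
        simp only [hval]
      rw [e2]
      push_cast [Nat.cast_sub (hbox _)]
      ring
    · rw [dif_neg h0]
      have hj0 : j.val = 0 := by omega
      simp only [hj0]
      rw [show (Finset.univ.filter (fun i : Fin r => i.val < 0)) = ∅ by
        ext i; simp]
      push_cast [Nat.cast_sub (hbox _)]
      simp
  · by_cases hB : j.val < r
    · -- case B : j.val + 1 = r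
      have hjr : j.val = r - 1 := by omega
      have hjm : j.val < m := by omega
      rw [dif_pos hjm, if_neg (show ¬ j.val = m by omega), if_pos hB, dif_pos hB]
      have e1 : nuSizeC (m+1) r s lam ((⟨j.val, hjm⟩ : Fin m).castSucc) = T := by
        simp only [nuSizeC, Fin.castSucc_mk]
        rw [if_neg hA, if_pos (by omega)]
      rw [e1]
      have hTsplit : T = (∑ i ∈ Finset.univ.filter
          (fun i : Fin r => i.val < j.val), (s - lam i)) + (s - lam ⟨j.val, hB⟩) := by
        rw [← filterStep (fun i => s - lam i) j.val hB]
        have h2 : j.val + 1 = r := by omega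
        simp only [h2]
        rw [hT, ← filterFull (fun i => s - lam i)]
      by_cases h0 : 0 < j.val
      · rw [dif_pos h0]
        have e2 : nuSizeC (m+1) r s lam ((⟨j.val - 1, by omega⟩ : Fin m).castSucc)
            = ∑ i ∈ Finset.univ.filter (fun i : Fin r => i.val < j.val), (s - lam i) := by
          simp only [nuSizeC, Fin.castSucc_mk]
          rw [if_pos (by omega)]
          have hval : j.val - 1 + 1 = j.val := by omega
          simp only [hval]
        rw [e2, hTsplit]
        push_cast [Nat.cast_sub (hbox _)]
        ring
      · rw [dif_neg h0]
        have hj0 : j.val = 0 := by omega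
        rw [hTsplit, show (Finset.univ.filter (fun i : Fin r => i.val < j.val)) = ∅ by
          ext i; simp; omega]
        push_cast [Nat.cast_sub (hbox _)]
        simp
    · -- r ≤ j.val
      have h0 : 0 < j.val := by omega
      rw [if_neg hB, dif_neg hB, dif_pos h0]
      by_cases hD : j.val = m
      · -- case D : j = last
        rw [dif_neg (show ¬ j.val < m by omega), if_pos hD]
        have e2 : nuSizeC (m+1) r s lam ((⟨j.val - 1, by omega⟩ : Fin m).castSucc) = T := by
          simp only [nuSizeC, Fin.castSucc_mk]
          rw [if_neg (by omega), if_pos (by omega)]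
        rw [e2, hNlast]
        have hdiv : ((T / 2 : ℕ) : ℤ) * 2 = (T : ℤ) := by
          rw [show ((T / 2 : ℕ) : ℤ) * 2 = ((T / 2 * 2 : ℕ) : ℤ) by push_cast; ring,
            Nat.div_mul_cancel hT2]
        rw [hdiv]
        ring
      · -- case C
        have hjm : j.val < m := by omega
        rw [dif_pos hjm, if_neg hD]
        have e1 : nuSizeC (m+1) r s lam ((⟨j.val, hjm⟩ : Fin m).castSucc) = T := by
          simp only [nuSizeC, Fin.castSucc_mk]
          rw [if_neg (by omega), if_pos (by omega)]
        have e2 : nuSizeC (m+1) r s lam ((⟨j.val - 1, by omega⟩ : Fin m).castSucc) = T := by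
          simp only [nuSizeC, Fin.castSucc_mk]
          rw [if_neg (by omega), if_pos (by omega)]
        rw [e1, e2]
        ring
end

section
/- Under the virtualization map on rigged configurations defined by m̂_{γ̃_a i}^{(b)} = m_i^{(a)} and Ĵ_{γ̃_a i}^{(b)} = γ_a J_i^{(a)} for all b ∈ φ^{-1}(a), the vacancy numbers transform by p̂_{γ̃_a i}^{(b)} = γ_a p_i^{(a)} for all b ∈ φ^{-1}(a), in the case of the folding C_n^{(1)} ↪ A_{2n-1}^{(1)} (γ_a = γ̃_a = 1 for a < n, γ_n = γ̃_n = 2, φ^{-1}(a) = {a, 2n−a} for a < n, φ^{-1}(n) = {n}). -/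
/-- The scaling factors `γ_a = γ̃_a` for the folding `Cₙ⁽¹⁾ ↪ A_{2n-1}⁽¹⁾`,
0-indexed (`a` corresponds to the classical node `a+1`): `γ_a = 1` for `a < n`
and `γ_n = 2`. -/
def gammaCn (n : ℕ) (a : Fin n) : ℕ := if a.val = n - 1 then 2 else 1

/-- The Cartan matrix of type `Cₙ`, 0-indexed: `A_{aa} = 2`,
`A_{a,a+1} = −1` except `A_{n−1,n} = −2`, and `A_{a+1,a} = −1`. -/
def cartanCn (n : ℕ) (a b : Fin n) : ℤ :=
  if a = b then 2
  else if a.val + 1 = b.val then (if b.val = n - 1 then -2 else -1)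
  else if b.val + 1 = a.val then -1
  else 0

/-- The Cartan matrix of type `A_N`, 0-indexed. -/
def cartanAN (N : ℕ) (a b : Fin N) : ℤ :=
  if a = b then 2 else if a.val + 1 = b.val ∨ b.val + 1 = a.val then -1 else 0

/-- The type `Cₙ⁽¹⁾` vacancy numbers
`p_i^{(a)} = Σ_j min(i,j) L_j^{(a)} − q_i^{(a)}` with
`q_i^{(a)} = Σ_b (A_{ab}/γ_b) Σ_j min(γ_a i, γ_b j) m_j^{(b)}`. -/
noncomputable def vacC (n : ℕ) (L m : Fin n → ℕ →₀ ℕ) (a : Fin n) (i : ℕ) : ℚ :=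
  (L a).sum (fun j c => ((min i j : ℕ) : ℚ) * (c : ℚ)) -
    ∑ b : Fin n, (cartanCn n a b : ℚ) / (gammaCn n b : ℚ) *
      (m b).sum (fun j c => ((min (gammaCn n a * i) (gammaCn n b * j) : ℕ) : ℚ) * (c : ℚ))

/-- The type `A_{2n-1}` (simply-laced) vacancy numbers
`p̂_i^{(b)} = Σ_j min(i,j) L̂_j^{(b)} − Σ_c Â_{bc} Σ_j min(i,j) m̂_j^{(c)}`. -/
noncomputable def vacA (N : ℕ) (L m : Fin N → ℕ →₀ ℕ) (a : Fin N) (i : ℕ) : ℚ :=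
  (L a).sum (fun j c => ((min i j : ℕ) : ℚ) * (c : ℚ)) -
    ∑ b : Fin N, (cartanAN N a b : ℚ) *
      (m b).sum (fun j c => ((min i j : ℕ) : ℚ) * (c : ℚ))

noncomputable def extQ (N : ℕ) (f : Fin N → ℚ) (k : ℤ) : ℚ :=
  if h : 0 ≤ k ∧ k < N then f ⟨k.toNat, by omega⟩ else 0

lemma extQ_eq (N : ℕ) (f : Fin N → ℚ) (k : ℤ) (c : Fin N) (hc : (c : ℤ) = k) :
    extQ N f k = f c := by
  have hlt := c.isLt
  unfold extQ
  rw [dif_pos ⟨by omega, by omega⟩]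
  congr 1
  exact Fin.ext (by simp; omega)

lemma extQ_zero (N : ℕ) (f : Fin N → ℚ) (k : ℤ) (hk : k < 0 ∨ (N : ℤ) ≤ k) :
    extQ N f k = 0 := by
  unfold extQ; rw [dif_neg (by omega)]

lemma sum_ite_int (N : ℕ) (f : Fin N → ℚ) (k : ℤ) :
    (∑ c : Fin N, if (c : ℤ) = k then f c else 0) = extQ N f k := by
  unfold extQ
  split_ifs with h
  · rw [Finset.sum_eq_single (⟨k.toNat, by omega⟩ : Fin N)]
    · rw [if_pos (by simp; omega)]
    · intro c _ hc
      rw [if_neg]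
      intro hck
      exact hc (Fin.ext (by simp; omega))
    · intro h'; exact absurd (Finset.mem_univ _) h'
  · apply Finset.sum_eq_zero
    intro c _
    rw [if_neg]
    have := c.isLt
    omega

lemma sum_cartanA (N : ℕ) (b : Fin N) (T : Fin N → ℚ) :
    ∑ c : Fin N, (cartanAN N b c : ℚ) * T c
      = 2 * T b - extQ N T ((b : ℤ) - 1) - extQ N T ((b : ℤ) + 1) := by
  have key : ∀ c : Fin N, (cartanAN N b c : ℚ) * T c
      = (if c = b then 2 * T c else 0)
        + (-(if (c : ℤ) = (b : ℤ) - 1 then T c else 0))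
        + (-(if (c : ℤ) = (b : ℤ) + 1 then T c else 0)) := by
    intro c
    simp only [cartanAN, Fin.ext_iff]
    split_ifs <;> first | (exfalso; omega) | (push_cast; ring1)
  simp only [key, Finset.sum_add_distrib, Finset.sum_neg_distrib]
  rw [Finset.sum_ite_eq' Finset.univ b (fun c => 2 * T c), if_pos (Finset.mem_univ _),
    sum_ite_int, sum_ite_int]
  ring

lemma sum_cartanC (n : ℕ) (a : Fin n) (S : Fin n → ℚ) :
    ∑ b : Fin n, (cartanCn n a b : ℚ) / (gammaCn n b : ℚ) * S b
      = 2 / (gammaCn n a : ℚ) * S a - extQ n S ((a : ℤ) - 1) - extQ n S ((a : ℤ) + 1) := by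
  have key : ∀ b : Fin n, (cartanCn n a b : ℚ) / (gammaCn n b : ℚ) * S b
      = (if b = a then 2 / (gammaCn n a : ℚ) * S b else 0)
        + (-(if (b : ℤ) = (a : ℤ) - 1 then S b else 0))
        + (-(if (b : ℤ) = (a : ℤ) + 1 then S b else 0)) := by
    intro b
    have hb := b.isLt
    have ha := a.isLt
    simp only [cartanCn, gammaCn, Fin.ext_iff]
    split_ifs <;> first | (exfalso; omega) | (push_cast; ring1)
  simp only [key, Finset.sum_add_distrib, Finset.sum_neg_distrib]
  rw [Finset.sum_ite_eq' Finset.univ a (fun b => 2 / (gammaCn n a : ℚ) * S b),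
    if_pos (Finset.mem_univ _), sum_ite_int, sum_ite_int]
  ring

lemma sum_scale (γ : ℕ) (hγ : 0 < γ) (g h : ℕ →₀ ℕ)
    (hgh : ∀ j, h (γ * j) = g j) (h0 : ∀ j, ¬ γ ∣ j → h j = 0)
    (F : ℕ → ℕ → ℚ) (hF0 : ∀ j, F j 0 = 0)
    (hFadd : ∀ j c₁ c₂, F j (c₁ + c₂) = F j c₁ + F j c₂) :
    h.sum F = g.sum fun j d => F (γ * j) d := by
  have hinj : Function.Injective (fun j => γ * j) := fun x y hxy => by
    simp only at hxy; exact Nat.eq_of_mul_eq_mul_left hγ hxy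
  have hh : h = Finsupp.mapDomain (fun j => γ * j) g := by
    ext j
    by_cases hd : γ ∣ j
    · obtain ⟨k, rfl⟩ := hd
      rw [Finsupp.mapDomain_apply hinj]
      exact hgh k
    · rw [h0 j hd, Finsupp.mapDomain_notin_range]
      rintro ⟨k, rfl⟩
      exact hd ⟨k, rfl⟩
  rw [hh]
  exact Finsupp.sum_mapDomain_index hF0 hFadd


set_option maxHeartbeats 1600000 in
/-- Under the virtualization map on rigged configurations for the folding
`Cₙ⁽¹⁾ ↪ A_{2n-1}⁽¹⁾` — i.e. `m̂_{γ̃_a i}^{(b)} = m_i^{(a)}` and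
`L̂_{γ_a i}^{(b)} = L_i^{(a)}` for all `b ∈ φ⁻¹(a) = {a, 2n−a}` (with the
vanishing conditions off `γ̃_a ℤ`) — the vacancy numbers transform by
`p̂_{γ̃_a i}^{(b)} = γ_a p_i^{(a)}` for all `b ∈ φ⁻¹(a)`.
Indices are 0-indexed: `b ∈ φ⁻¹(a)` means `b = a` or `b + a = 2n − 2`. -/
theorem virtual_vacancy (n : ℕ) (hn : 2 ≤ n)
    (L m : Fin n → ℕ →₀ ℕ) (Lh mh : Fin (2 * n - 1) → ℕ →₀ ℕ)
    (hm : ∀ (a : Fin n) (b : Fin (2 * n - 1)),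
      (b.val = a.val ∨ b.val + a.val = 2 * n - 2) →
        ∀ i, mh b (gammaCn n a * i) = m a i)
    (hm0 : ∀ b : Fin (2 * n - 1), b.val = n - 1 → ∀ j, ¬ 2 ∣ j → mh b j = 0)
    (hL : ∀ (a : Fin n) (b : Fin (2 * n - 1)),
      (b.val = a.val ∨ b.val + a.val = 2 * n - 2) →
        ∀ i, Lh b (gammaCn n a * i) = L a i)
    (hL0 : ∀ b : Fin (2 * n - 1), b.val = n - 1 → ∀ j, ¬ 2 ∣ j → Lh b j = 0) :
    ∀ (a : Fin n) (b : Fin (2 * n - 1)),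
      (b.val = a.val ∨ b.val + a.val = 2 * n - 2) →
        ∀ i, vacA (2 * n - 1) Lh mh b (gammaCn n a * i) =
          (gammaCn n a : ℚ) * vacC n L m a i := by
  intro a b hb i
  have hbN := b.isLt
  have han := a.isLt
  set γ := gammaCn n a with hγdef
  have hγ : (a.val = n - 1 ∧ γ = 2) ∨ (a.val ≠ n - 1 ∧ γ = 1) := by
    by_cases h : a.val = n - 1
    · exact Or.inl ⟨h, by rw [hγdef]; unfold gammaCn; rw [if_pos h]⟩
    · exact Or.inr ⟨h, by rw [hγdef]; unfold gammaCn; rw [if_neg h]⟩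
  have hγpos : 0 < γ := by rcases hγ with ⟨_, h⟩ | ⟨_, h⟩ <;> omega
  -- the classical projection
  set phi : Fin (2 * n - 1) → Fin n :=
    fun c => ⟨min c.val (2 * n - 2 - c.val), by have := c.isLt; omega⟩ with hphi
  have hphirel : ∀ c : Fin (2 * n - 1),
      c.val = (phi c).val ∨ c.val + (phi c).val = 2 * n - 2 := by
    intro c
    have := c.isLt
    simp only [hphi]
    omega
  -- the S function
  set Sfun : Fin n → ℚ :=
    fun a' => (m a').sum
      (fun j d => ((min (γ * i) (gammaCn n a' * j) : ℕ) : ℚ) * (d : ℚ)) with hSfun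
  -- rewrite the mh-sums
  have hT : ∀ c : Fin (2 * n - 1),
      (mh c).sum (fun j d => ((min (γ * i) j : ℕ) : ℚ) * (d : ℚ)) = Sfun (phi c) := by
    intro c
    have hc := c.isLt
    rw [sum_scale (gammaCn n (phi c)) (by unfold gammaCn; split_ifs <;> omega)
      (m (phi c)) (mh c) (fun j => hm (phi c) c (hphirel c) j)
      (fun j hj => by
        by_cases hcn : (phi c).val = n - 1
        · have hc' : c.val = n - 1 := by
            have : min c.val (2 * n - 2 - c.val) = n - 1 := hcn
            omega
          apply hm0 c hc'
          intro h2
          apply hj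
          unfold gammaCn
          rw [if_pos hcn]
          exact h2
        · exfalso
          apply hj
          unfold gammaCn
          rw [if_neg hcn]
          exact one_dvd j)
      _ (fun j => by simp) (fun j c₁ c₂ => by push_cast; ring)]
  -- rewrite the Lh-sum
  have hbn1 : a.val = n - 1 → b.val = n - 1 := by intro h; omega
  have hLA : (Lh b).sum (fun j d => ((min (γ * i) j : ℕ) : ℚ) * (d : ℚ))
      = (γ : ℚ) * (L a).sum (fun j d => ((min i j : ℕ) : ℚ) * (d : ℚ)) := by
    rw [sum_scale γ hγpos (L a) (Lh b) (fun j => hL a b hb j)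
      (fun j hj => by
        rcases hγ with ⟨ha1, hγ2⟩ | ⟨ha1, hγ1⟩
        · exact hL0 b (hbn1 ha1) j (by rwa [hγ2] at hj)
        · exact absurd (hγ1 ▸ one_dvd j) hj)
      _ (fun j => by simp) (fun j c₁ c₂ => by push_cast; ring)]
    rw [Finsupp.mul_sum]
    apply Finsupp.sum_congr
    intro j _
    have : min (γ * i) (γ * j) = γ * min i j := by
      rcases Nat.le_total i j with h | h
      · rw [min_eq_left h, min_eq_left (Nat.mul_le_mul_left γ h)]
      · rw [min_eq_right h, min_eq_right (Nat.mul_le_mul_left γ h)]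
    rw [this]
    push_cast
    ring
  -- unfold and apply the cartan-sum lemmas
  unfold vacA vacC
  rw [← hγdef]
  rw [sum_cartanA, sum_cartanC, hLA]
  rw [← hγdef]
  have hTfun : (fun c => (mh c).sum (fun j d => ((min (γ * i) j : ℕ) : ℚ) * (d : ℚ)))
      = fun c => Sfun (phi c) := funext hT
  rw [show ((b : ℤ)) = (b.val : ℤ) from rfl] at *
  simp only [hT, hTfun]
  -- evaluate phi b
  have hphib : phi b = a := Fin.ext (by simp only [hphi]; omega)
  rw [hphib]
  -- now case analysis
  have hne : (γ : ℚ) ≠ 0 := by rcases hγ with ⟨_, h⟩ | ⟨_, h⟩ <;> rw [h] <;> norm_num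
  have hcancel : (γ : ℚ) * (2 / (γ : ℚ) * Sfun a) = 2 * Sfun a := by
    field_simp
  rcases hγ with ⟨ha1, hγ2⟩ | ⟨ha1, hγ1⟩
  · -- a = n-1, b = n-1, γ = 2
    have hb1 : b.val = n - 1 := hbn1 ha1
    rw [extQ_eq (2*n-1) _ ((b.val : ℤ) - 1) ⟨n - 2, by omega⟩ (by push_cast; omega),
        extQ_eq (2*n-1) _ ((b.val : ℤ) + 1) ⟨n, by omega⟩ (by push_cast; omega),
        extQ_eq n Sfun ((a.val : ℤ) - 1) ⟨n - 2, by omega⟩ (by push_cast; omega),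
        extQ_zero n Sfun ((a.val : ℤ) + 1) (by right; push_cast; omega)]
    have e1 : phi ⟨n - 2, by omega⟩ = (⟨n - 2, by omega⟩ : Fin n) :=
      Fin.ext (by simp only [hphi]; omega)
    have e2 : phi ⟨n, by omega⟩ = (⟨n - 2, by omega⟩ : Fin n) :=
      Fin.ext (by simp only [hphi]; omega)
    have hγQ : (γ : ℚ) = 2 := by rw [hγ2]; norm_num
    rw [e1, e2]
    linear_combination hcancel - Sfun ⟨n - 2, by omega⟩ * hγQ
  · -- γ = 1
    rcases hb with hb | hb
    · -- b = a
      by_cases ha0 : a.val = 0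
      · rw [extQ_zero (2*n-1) _ ((b.val : ℤ) - 1) (by left; omega),
            extQ_zero n Sfun ((a.val : ℤ) - 1) (by left; omega),
            extQ_eq (2*n-1) _ ((b.val : ℤ) + 1) ⟨a.val + 1, by omega⟩ (by push_cast; omega),
            extQ_eq n Sfun ((a.val : ℤ) + 1) ⟨a.val + 1, by omega⟩ (by push_cast; omega)]
        have e2 : phi ⟨a.val + 1, by omega⟩ = (⟨a.val + 1, by omega⟩ : Fin n) :=
          Fin.ext (by simp only [hphi]; omega)
        have hγQ : (γ : ℚ) = 1 := by rw [hγ1]; norm_num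
        rw [e2]
        linear_combination hcancel - Sfun ⟨a.val + 1, by omega⟩ * hγQ
      · rw [extQ_eq (2*n-1) _ ((b.val : ℤ) - 1) ⟨a.val - 1, by omega⟩ (by push_cast; omega),
            extQ_eq n Sfun ((a.val : ℤ) - 1) ⟨a.val - 1, by omega⟩ (by push_cast; omega),
            extQ_eq (2*n-1) _ ((b.val : ℤ) + 1) ⟨a.val + 1, by omega⟩ (by push_cast; omega),
            extQ_eq n Sfun ((a.val : ℤ) + 1) ⟨a.val + 1, by omega⟩ (by push_cast; omega)]
        have e1 : phi ⟨a.val - 1, by omega⟩ = (⟨a.val - 1, by omega⟩ : Fin n) :=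
          Fin.ext (by simp only [hphi]; omega)
        have e2 : phi ⟨a.val + 1, by omega⟩ = (⟨a.val + 1, by omega⟩ : Fin n) :=
          Fin.ext (by simp only [hphi]; omega)
        have hγQ : (γ : ℚ) = 1 := by rw [hγ1]; norm_num
        rw [e1, e2]
        linear_combination hcancel -
          (Sfun ⟨a.val - 1, by omega⟩ + Sfun ⟨a.val + 1, by omega⟩) * hγQ
    · -- b = 2n-2-a
      have hbv : b.val = 2 * n - 2 - a.val := by omega
      by_cases ha0 : a.val = 0
      · rw [extQ_eq (2*n-1) _ ((b.val : ℤ) - 1) ⟨2*n - 3 - a.val, by omega⟩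
              (by push_cast; omega),
            extQ_zero (2*n-1) _ ((b.val : ℤ) + 1) (by right; push_cast; omega),
            extQ_zero n Sfun ((a.val : ℤ) - 1) (by left; omega),
            extQ_eq n Sfun ((a.val : ℤ) + 1) ⟨a.val + 1, by omega⟩ (by push_cast; omega)]
        have e1 : phi ⟨2*n - 3 - a.val, by omega⟩ = (⟨a.val + 1, by omega⟩ : Fin n) :=
          Fin.ext (by simp only [hphi]; omega)
        have hγQ : (γ : ℚ) = 1 := by rw [hγ1]; norm_num
        rw [e1]
        linear_combination hcancel - Sfun ⟨a.val + 1, by omega⟩ * hγQ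
      · rw [extQ_eq (2*n-1) _ ((b.val : ℤ) - 1) ⟨2*n - 3 - a.val, by omega⟩
              (by push_cast; omega),
            extQ_eq (2*n-1) _ ((b.val : ℤ) + 1) ⟨2*n - 1 - a.val, by omega⟩
              (by push_cast; omega),
            extQ_eq n Sfun ((a.val : ℤ) - 1) ⟨a.val - 1, by omega⟩ (by push_cast; omega),
            extQ_eq n Sfun ((a.val : ℤ) + 1) ⟨a.val + 1, by omega⟩ (by push_cast; omega)]
        have e1 : phi ⟨2*n - 3 - a.val, by omega⟩ = (⟨a.val + 1, by omega⟩ : Fin n) :=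
          Fin.ext (by simp only [hphi]; omega)
        have e2 : phi ⟨2*n - 1 - a.val, by omega⟩ = (⟨a.val - 1, by omega⟩ : Fin n) :=
          Fin.ext (by simp only [hphi]; omega)
        have hγQ : (γ : ℚ) = 1 := by rw [hγ1]; norm_num
        rw [e1, e2]
        linear_combination hcancel -
          (Sfun ⟨a.val - 1, by omega⟩ + Sfun ⟨a.val + 1, by omega⟩) * hγQ
end

section
/- In type D_n with r ≤ n − 2, let x + y = r and let α_a, ϖ_a denote the simple roots and fundamental weights in the type D_n ℤ^n realization; then for the '+'-column configuration ν = (∅ [x times], (1),(1²),…,(1^y), (1^y),…,(1^y), (1^{y/2}), (1^{y/2})) one has Σ_{a=1}^{n} |ν^{(a)}| α_a = ϖ_r − ϖ_x. -/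
/-- The number of boxes `|ν^{(a)}|` of the rigged configuration associated by
`ζ_rc` to a single `+`-column of height `x` in a `±`-diagram for `B^{r,s}` of
type `Dₙ⁽¹⁾` (`r ≤ n−2`), with `y = r − x`:
`ν^{(a)} = ∅` for `a ≤ x`, `ν^{(a)} = (1^{a−x})` for `x < a ≤ r`,
`ν^{(a)} = (1^y)` for `r ≤ a ≤ n−2`, and `ν^{(n−1)} = ν^{(n)} = (1^{y/2})`
(1-indexed `a = k+1`). -/
def nuPlusCol (n r x : ℕ) (k : Fin n) : ℕ :=
  if k.val + 1 ≤ x then 0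
  else if k.val + 1 ≤ r then k.val + 1 - x
  else if k.val + 1 ≤ n - 2 then r - x
  else (r - x) / 2

set_option maxHeartbeats 1600000 in
/-- Weight-consistency of the column-by-column map `ζ_rc` in type `Dₙ` for a
`+`-column of height `x`: with `0 ≤ x ≤ r ≤ n−2` and `y = r − x` even, the
`+`-column configuration satisfies `Σ_{a=1}^{n} |ν^{(a)}| α_a = ϖ_r − ϖ_x`
in the `ℤⁿ` realization (`ϖ_a = ε_1 + ⋯ + ε_a`, `ϖ_0 = 0`). -/
theorem plusCol_weight (n r x : ℕ) (hn : 4 ≤ n) (hx : x ≤ r) (hr : r ≤ n - 2)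
    (heven : Even (r - x)) :
    ∀ j : Fin n,
      (∑ k : Fin n, (nuPlusCol n r x k : ℤ) * alphaD n k j) =
        (if j.val < r then 1 else 0) - (if j.val < x then 1 else 0) := by
  obtain ⟨m, rfl⟩ : ∃ m, n = m + 4 := ⟨n - 4, by omega⟩
  obtain ⟨y2, hy2⟩ := heven
  have hr' : r ≤ m + 2 := by omega
  intro j
  have hj : j.val < m + 4 := j.isLt
  set nu : ℕ → ℤ := fun k =>
    if k + 1 ≤ x then (0:ℤ) else if k + 1 ≤ r then (k:ℤ) + 1 - (x:ℤ)
    else if k + 1 ≤ m + 2 then (r:ℤ) - (x:ℤ) else (y2:ℤ) with hnu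
  set a : ℕ → ℤ := fun k =>
    if k + 1 < m + 4 then (if j.val = k then 1 else if j.val = k + 1 then (-1:ℤ) else 0)
    else (if j.val = m + 3 ∨ j.val = m + 2 then 1 else 0) with ha
  have hterm : ∀ k : Fin (m+4),
      (nuPlusCol (m+4) r x k : ℤ) * alphaD (m+4) k j = nu k.val * a k.val := by
    intro k
    have h1 : (nuPlusCol (m+4) r x k : ℤ) = nu k.val := by
      simp only [nuPlusCol, hnu, show m + 4 - 2 = m + 2 from by omega]
      split_ifs <;> omega
    have h2 : alphaD (m+4) k j = a k.val := by
      simp only [alphaD, ha, Fin.ext_iff, show m + 4 - 1 = m + 3 from by omega,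
        show m + 4 - 2 = m + 2 from by omega]
    rw [h1, h2]
  rw [Finset.sum_congr rfl (fun k _ => hterm k)]
  rw [show (∑ k : Fin (m+4), nu k.val * a k.val) = ∑ k ∈ Finset.range (m+4), nu k * a k from
    Fin.sum_univ_eq_sum_range (fun k => nu k * a k) (m+4)]
  rw [Finset.sum_range_succ]
  have hsplit : ∑ k ∈ Finset.range (m+3), nu k * a k
      = (∑ k ∈ Finset.range (m+3), if j.val = k then nu k else 0)
        + ∑ k ∈ Finset.range (m+3), (if j.val = k + 1 then -nu k else 0) := by
    rw [← Finset.sum_add_distrib]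
    refine Finset.sum_congr rfl fun k hk => ?_
    have hk' : k + 1 < m + 4 := by
      have := Finset.mem_range.mp hk; omega
    simp only [ha, if_pos hk']
    split_ifs with h1 h2 <;> ring_nf <;> omega
  rw [hsplit]
  have hS1 : (∑ k ∈ Finset.range (m+3), if j.val = k then nu k else 0)
      = if j.val < m + 3 then nu j.val else 0 := by
    rw [Finset.sum_ite_eq]
    simp [Finset.mem_range]
  have hS2 : (∑ k ∈ Finset.range (m+3), if j.val = k + 1 then -nu k else 0)
      = -nu (j.val - 1) - (if j.val = 0 then -nu 0 else 0) := by
    have h := Finset.sum_range_succ' (fun i => if j.val = i then -nu (i - 1) else 0) (m+3)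
    simp only [Nat.add_sub_cancel] at h
    have h2 : (∑ i ∈ Finset.range (m+4), if j.val = i then -nu (i - 1) else 0)
        = -nu (j.val - 1) := by
      rw [Finset.sum_ite_eq]
      simp [Finset.mem_range, hj]
    rw [h2] at h
    have h3 : (if j.val = 0 then -nu (0 - 1) else 0) = (if j.val = 0 then -nu 0 else 0) := by
      norm_num
    rw [h3] at h
    linarith [h]
  rw [hS1, hS2]
  have hnu3 : nu (m + 3) = (y2 : ℤ) := by
    simp only [hnu]
    rw [if_neg (by omega), if_neg (by omega), if_neg (by omega)]
  have ha3 : a (m + 3) = if j.val = m + 3 ∨ j.val = m + 2 then 1 else 0 := by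
    simp only [ha, if_neg (by omega : ¬ (m + 3 + 1 < m + 4))]
  rw [hnu3, ha3]
  by_cases hcase : j.val = m + 3 ∨ j.val = m + 2
  · rw [if_pos hcase, mul_one]
    simp only [hnu]
    split_ifs <;> omega
  · rw [if_neg hcase, mul_zero]
    simp only [hnu]
    split_ifs <;> omega
end

section
/- Let t be a Kashiwara–Nakashima one-column tableau of type B_n of height r (r < n) with entries from {1,…,n, 0, n̄,…,1̄}, satisfying the one-column condition. With t_+, t_− its sets of unbarred/barred nonzero letters, K := t_+ ∩ t_−, k_0 the number of 0's, J_0 the lexicographically maximal k_0-subset of ({1,…,n} \ (t_+ ∪ t_−)), and J the lexicographically maximal |K|-subset of ({1,…,n} \ (t_+ ∪ t_− ∪ J_0)) all of whose elements are smaller than the corresponding elements of K. Then the sets v_+ := t_+ \ K, v_- := t_- \ K, K, J_0, J are pairwise disjoint, and |v_+| + |v_-| + 2|K| + |J_0| ≤ r together with |v_+| + |v_-| + 2|K| + k_0 = r. -/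
/-!
Let `C` be the letters of `{1, …, n}` missing from the column. Take `J` to be the `|K|` smallest
elements of `C` and `J0` any `k0` further elements of `C`; there is room since
`|C| = n - |tp ∪ tm| ≥ r - |tp| - |tm| + |K| = k0 + |K|`.

For `a ∈ K`, the numbers `1, …, a` are either letters of `tp ∪ tm` that are `≤ a` or elements
of `C` below `a`. By inclusion–exclusion, the one-column condition `p + q ≤ a` reads
`#{tp ∪ tm, ≤ a} + #{K, ≤ a} ≤ a`, hence `#{K, ≤ a} ≤ #{C, < a}`. If `a` is the `i`-th element
of `K`, then more than `i` elements of `C` lie below `a`, so the `i`-th element of `C`, which is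
the `i`-th element of `J`, is smaller than `a`.
-/
open Finset

namespace Finset

variable {α : Type*} [LinearOrder α]

theorem filter_lt_sort_getElem (s : Finset α) {i : ℕ} (hi : i < s.sort.length) :
    s.filter (· < s.sort[i]) = (s.sort.take i).toFinset := by
  ext y
  rw [mem_filter, List.mem_toFinset, List.mem_take_iff_getElem, ← mem_sort (· ≤ ·),
    List.mem_iff_getElem]
  constructor
  · rintro ⟨⟨j, hj, rfl⟩, hji⟩
    exact ⟨j, by grind [(sortedLT_sort s).getElem_lt_getElem_iff], rfl⟩
  · rintro ⟨j, hj, rfl⟩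
    exact ⟨⟨j, _, rfl⟩, by grind [(sortedLT_sort s).getElem_lt_getElem_iff]⟩

theorem card_toFinset_take_sort {s : Finset α} {k : ℕ} (hk : k ≤ #s) :
    #(s.sort.take k).toFinset = k := by
  rw [List.toFinset_card_of_nodup ((sort_nodup _ _).sublist (List.take_sublist _ _)),
    List.length_take, length_sort, min_eq_left hk]

theorem card_filter_lt_sort_getElem (s : Finset α) {i : ℕ} (hi : i < s.sort.length) :
    #(s.filter (· < s.sort[i])) = i := by
  rw [filter_lt_sort_getElem, card_toFinset_take_sort (by simpa using hi.le)]

theorem sort_getElem_lt_of_lt_card_filter {s : Finset α} {a : α} {i : ℕ}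
    (hi : i < #(s.filter (· < a))) :
    s.sort[i]'((hi.trans_le (card_filter_le _ _)).trans_eq (length_sort _).symm) < a := by
  have hs : i < s.sort.length := (hi.trans_le (card_filter_le _ _)).trans_eq (length_sort _).symm
  by_contra! hle
  have hsub : s.filter (· < a) ⊆ s.filter (· < s.sort[i]) :=
    monotone_filter_right _ fun _ _ hy => hy.trans_le hle
  have := card_le_card hsub
  rw [card_filter_lt_sort_getElem] at this
  omega

theorem sort_toFinset_take_sort (s : Finset α) (k : ℕ) :
    (s.sort.take k).toFinset.sort = s.sort.take k :=
  List.toFinset_sort _ ((sort_nodup _ _).sublist (List.take_sublist _ _)) |>.mpr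
    ((pairwise_sort _ _).sublist (List.take_sublist _ _))

theorem forall₂_lt_take_sort {C K : Finset α} (hKC : #K ≤ #C)
    (hcount : ∀ a ∈ K, #(K.filter (· ≤ a)) ≤ #(C.filter (· < a))) :
    List.Forall₂ (· < ·) (C.sort.take #K) K.sort := by
  rw [List.forall₂_iff_get]
  refine ⟨by simp [hKC], fun i hiC hiK => ?_⟩
  set a := K.sort[i]
  have haK : a ∈ K := (mem_sort _).mp (List.getElem_mem _)
  have hlt : K.filter (· < a) ⊂ K.filter (· ≤ a) :=
    ssubset_iff_subset_ne.mpr ⟨monotone_filter_right _ fun _ _ => le_of_lt,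
      fun h => by simpa using h.superset (mem_filter.mpr ⟨haK, le_rfl⟩)⟩
  have hi : i < #(C.filter (· < a)) := by
    calc i = #(K.filter (· < a)) := (card_filter_lt_sort_getElem K hiK).symm
      _ < #(K.filter (· ≤ a)) := card_lt_card hlt
      _ ≤ #(C.filter (· < a)) := hcount a haK
  simpa using sort_getElem_lt_of_lt_card_filter hi

end Finset

theorem card_filter_le_add_card_filter_lt_sdiff {S : Finset ℕ} {n a : ℕ}
    (hS : S ⊆ Icc 1 n) (ha : a ∈ S) :
    #(S.filter (· ≤ a)) + #((Icc 1 n \ S).filter (· < a)) = a := by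
  have hpartition : S.filter (· ≤ a) ∪ (Icc 1 n \ S).filter (· < a) = Icc 1 a := by
    ext x
    have hxS := @hS x
    have haS := hS ha
    simp only [mem_union, mem_filter, mem_sdiff, mem_Icc] at hxS haS ⊢
    grind
  have hdisj : Disjoint (S.filter (· ≤ a)) ((Icc 1 n \ S).filter (· < a)) :=
    disjoint_left.mpr fun _ hx hx' => (mem_sdiff.mp (mem_filter.mp hx').1).2 (mem_filter.mp hx).1
  rw [← card_union_of_disjoint hdisj, hpartition, Nat.card_Icc, Nat.add_sub_cancel]

theorem card_filter_inter_le_card_filter_lt_sdiff_union {tp tm : Finset ℕ} {n a : ℕ}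
    (htp : tp ⊆ Icc 1 n) (htm : tm ⊆ Icc 1 n) (ha : a ∈ tp ∩ tm)
    (hcol : #(tp.filter (· ≤ a)) + #(tm.filter (· ≤ a)) ≤ a) :
    #((tp ∩ tm).filter (· ≤ a)) ≤ #((Icc 1 n \ (tp ∪ tm)).filter (· < a)) := by
  have hunion := card_union_add_card_inter (tp.filter (· ≤ a)) (tm.filter (· ≤ a))
  rw [← filter_union, ← filter_inter_distrib] at hunion
  have hcount := card_filter_le_add_card_filter_lt_sdiff (union_subset htp htm)
    (mem_union_left _ (mem_inter.mp ha).1)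
  omega

theorem pairwise_disjoint_sdiff_sdiff_inter {α : Type*} [DecidableEq α] {s t u v : Finset α}
    (hu : Disjoint u (s ∪ t)) (hv : Disjoint v (s ∪ t ∪ u)) :
    List.Pairwise Disjoint [s \ t, t \ s, s ∩ t, u, v] := by
  simp only [disjoint_left, mem_union, not_or] at hu hv
  simp only [List.pairwise_cons, List.mem_cons, List.not_mem_nil, or_false, forall_eq_or_imp,
    forall_eq, List.Pairwise.nil, and_true, IsEmpty.forall_iff, implies_true, disjoint_left,
    mem_sdiff, mem_inter]
  grind

/-- The column is encoded by its unbarred letters `tp`, its barred letters `tm` and its number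
`k0` of zeros; the positions of `a` from the bottom and of `ā` from the top are
`#{b ∈ tp | b ≤ a}` and `#{b ∈ tm | b ≤ a}`. -/
theorem pm_diagram_data_exists (n r : ℕ) (hr : r < n)
    (tp tm : Finset ℕ) (htp : tp ⊆ Finset.Icc 1 n) (htm : tm ⊆ Finset.Icc 1 n)
    (k0 : ℕ) (hheight : tp.card + tm.card + k0 = r)
    (hcol : ∀ a ∈ tp ∩ tm,
      (tp.filter (· ≤ a)).card + (tm.filter (· ≤ a)).card ≤ a) :
    ∃ J0 J : Finset ℕ,
      J0 ⊆ Finset.Icc 1 n \ (tp ∪ tm) ∧ J0.card = k0 ∧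
      J ⊆ Finset.Icc 1 n \ (tp ∪ tm ∪ J0) ∧ J.card = (tp ∩ tm).card ∧
      List.Forall₂ (· < ·) (J.sort (· ≤ ·)) ((tp ∩ tm).sort (· ≤ ·)) ∧
      List.Pairwise Disjoint [tp \ tm, tm \ tp, tp ∩ tm, J0, J] ∧
      (tp \ tm).card + (tm \ tp).card + 2 * (tp ∩ tm).card + J0.card ≤ r ∧
      (tp \ tm).card + (tm \ tp).card + 2 * (tp ∩ tm).card + k0 = r := by
  set C := Icc 1 n \ (tp ∪ tm)
  have hCcard : #C = n - #(tp ∪ tm) := by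
    rw [card_sdiff_of_subset (union_subset htp htm), Nat.card_Icc, Nat.add_sub_cancel]
  have hunion := card_union_add_card_inter tp tm
  have hunion_le : #(tp ∪ tm) ≤ n := by simpa using card_le_card (union_subset htp htm)
  have hKC : #(tp ∩ tm) + k0 ≤ #C := by omega
  set J := (C.sort.take #(tp ∩ tm)).toFinset
  have hJC : J ⊆ C := fun _ hx => (mem_sort _).mp (List.mem_of_mem_take (List.mem_toFinset.mp hx))
  have hJcard : #J = #(tp ∩ tm) := card_toFinset_take_sort (by omega)
  obtain ⟨J0, hJ0, hJ0card⟩ : ∃ J0 ⊆ C \ J, #J0 = k0 :=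
    exists_subset_card_eq (by rw [card_sdiff_of_subset hJC]; omega)
  have hJ0C : J0 ⊆ C := hJ0.trans sdiff_subset
  have hJ : J ⊆ Icc 1 n \ (tp ∪ tm ∪ J0) :=
    have ⟨hJIcc, hJS⟩ := subset_sdiff.mp hJC
    subset_sdiff.mpr ⟨hJIcc, disjoint_union_right.mpr ⟨hJS, (subset_sdiff.mp hJ0).2.symm⟩⟩
  have hdom : List.Forall₂ (· < ·) J.sort (tp ∩ tm).sort := by
    rw [sort_toFinset_take_sort]
    exact forall₂_lt_take_sort (by omega) fun a ha =>
      card_filter_inter_le_card_filter_lt_sdiff_union htp htm ha (hcol a ha)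
  have hsplit_tp := card_sdiff_add_card_inter tp tm
  have hsplit_tm := card_sdiff_add_card_inter tm tp
  rw [inter_comm] at hsplit_tm
  exact ⟨J0, J, hJ0C, hJ0card, hJ, hJcard, hdom,
    pairwise_disjoint_sdiff_sdiff_inter (subset_sdiff.mp hJ0C).2 (subset_sdiff.mp hJ).2,
    by omega, by omega⟩
end

section
/- In the folding B_n ↪ D_{n+1} with γ_a = 2 for a < n and γ_n = 1, for a one-column B_n tableau t of height r < n, the image v(t) is a two-column D_{n+1} tableau containing neither the letter n+1 nor the letter (n+1)-bar; more precisely, since f_n^v = f̂_n f̂_{n+1} sends n directly to n̄ (through n+1 or (n+1)-bar as an intermediate that is immediately removed), any element of the virtual crystal generated from the highest weight element (which contains no n+1 or (n+1)-bar) contains no occurrence of n+1 or (n+1)-bar. -/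
/-!
For `a < n`, the operators `f̂_a` and `ê_a` only create the letters `a`, `a+1`, `ā`, `(a+1)‾`,
all different from `n+1` and `(n+1)‾`.

For `a = n`, on a word without `n+1` and `(n+1)‾` the `n`-signature and the `(n+1)`-signature
agree letter by letter. `f̂_n` turns some letter `n` into `n+1`, which carries the same
`(n+1)`-signature as `n` carried for `n`; so `f̂_{n+1}` acts at the same position and turns that
`n+1` into `n̄`. Dually `ê_n` turns some `n̄` into `(n+1)‾`, which `ê_{n+1}` turns into `n`.
-/

/-- Letters of the type `D_{n+1}` vector crystal: `(k, false)` is the letter `k`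
and `(k, true)` is the barred letter `k̄`, for `1 ≤ k ≤ n+1`. -/
abbrev DLetter := ℕ × Bool

/-- The single-box crystal operator `f̂_a` of type `D_{n+1}` (for `1 ≤ a ≤ n+1`):
for `a ≤ n`, `a ↦ a+1` and `(a+1)‾ ↦ ā`; for `a = n+1`, `n ↦ (n+1)‾` and
`n+1 ↦ n̄`. -/
def fBox (n a : ℕ) (x : DLetter) : Option DLetter :=
  if a ≤ n then
    if x = (a, false) then some (a + 1, false)
    else if x = (a + 1, true) then some (a, true)
    else none
  else
    if x = (n, false) then some (n + 1, true)
    else if x = (n + 1, false) then some (n, true)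
    else none

/-- The single-box crystal operator `ê_a` of type `D_{n+1}`. -/
def eBox (n a : ℕ) (x : DLetter) : Option DLetter :=
  if a ≤ n then
    if x = (a + 1, false) then some (a, false)
    else if x = (a, true) then some (a + 1, true)
    else none
  else
    if x = (n + 1, true) then some (n, false)
    else if x = (n, true) then some (n + 1, false)
    else none

def phiBox (n a : ℕ) (x : DLetter) : ℤ := if (fBox n a x).isSome then 1 else 0

def epsBox (n a : ℕ) (x : DLetter) : ℤ := if (eBox n a x).isSome then 1 else 0

/-- `φ_a` of a word (a column read as a tensor product of boxes, the head of
the list being the leftmost factor), by the tensor product rule. -/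
def phiList (n a : ℕ) : List DLetter → ℤ
  | [] => 0
  | x :: xs => max (phiBox n a x) (phiBox n a x + phiList n a xs - epsBox n a x)

/-- `ε_a` of a word by the tensor product rule. -/
def epsList (n a : ℕ) : List DLetter → ℤ
  | [] => 0
  | x :: xs => max (epsList n a xs) (epsList n a xs + epsBox n a x - phiList n a xs)

/-- `f̂_a` on words via the tensor product (signature) rule. -/
def fList (n a : ℕ) : List DLetter → Option (List DLetter)
  | [] => none
  | x :: xs =>
      if phiList n a xs ≤ epsBox n a x then (fBox n a x).map (· :: xs)
      else (fList n a xs).map (x :: ·)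

/-- `ê_a` on words via the tensor product (signature) rule. -/
def eList (n a : ℕ) : List DLetter → Option (List DLetter)
  | [] => none
  | x :: xs =>
      if phiList n a xs < epsBox n a x then (eBox n a x).map (· :: xs)
      else (eList n a xs).map (x :: ·)

/-- The virtual crystal operator `f_a^v` for the folding `Bₙ ↪ D_{n+1}`:
`f_a^v = f̂_a²` for `a < n` and `f_n^v = f̂_n f̂_{n+1}`. -/
def fVirtB (n a : ℕ) (l : List DLetter) : Option (List DLetter) :=
  if a < n then (fList n a l).bind (fList n a)
  else (fList n a l).bind (fList n (n + 1))

/-- The virtual crystal operator `e_a^v` for the folding `Bₙ ↪ D_{n+1}`. -/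
def eVirtB (n a : ℕ) (l : List DLetter) : Option (List DLetter) :=
  if a < n then (eList n a l).bind (eList n a)
  else (eList n a l).bind (eList n (n + 1))

/-- A word contains neither the letter `n+1` nor the letter `(n+1)‾`. -/
def NoSpinLetter (n : ℕ) (l : List DLetter) : Prop := ∀ x ∈ l, x.1 ≠ n + 1

section Crystal

variable {n a b : ℕ}

def SameSignature (n a b : ℕ) (x y : DLetter) : Prop :=
  phiBox n a x = phiBox n b y ∧ epsBox n a x = epsBox n b y

theorem phiList_eq_of_forall₂ {l m : List DLetter} (h : List.Forall₂ (SameSignature n a b) l m) :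
    phiList n a l = phiList n b m := by
  induction h with
  | nil => rfl
  | cons hxy _ ih => simp only [phiList, hxy.1, hxy.2, ih]

theorem mem_of_fList_eq_some {l m : List DLetter} (h : fList n a l = some m) {z : DLetter}
    (hz : z ∈ m) : z ∈ l ∨ ∃ x, fBox n a x = some z := by
  induction l generalizing m with
  | nil => simp [fList] at h
  | cons x xs ih =>
    simp only [fList] at h
    split_ifs at h
    · obtain ⟨y, hy, rfl⟩ := Option.map_eq_some_iff.1 h
      rcases List.mem_cons.1 hz with rfl | hz
      · exact .inr ⟨x, hy⟩
      · exact .inl (List.mem_cons_of_mem x hz)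
    · obtain ⟨m', hm', rfl⟩ := Option.map_eq_some_iff.1 h
      rcases List.mem_cons.1 hz with rfl | hz
      · exact .inl List.mem_cons_self
      · exact (ih hm' hz).imp_left (List.mem_cons_of_mem x)

theorem mem_of_eList_eq_some {l m : List DLetter} (h : eList n a l = some m) {z : DLetter}
    (hz : z ∈ m) : z ∈ l ∨ ∃ x, eBox n a x = some z := by
  induction l generalizing m with
  | nil => simp [eList] at h
  | cons x xs ih =>
    simp only [eList] at h
    split_ifs at h
    · obtain ⟨y, hy, rfl⟩ := Option.map_eq_some_iff.1 h
      rcases List.mem_cons.1 hz with rfl | hz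
      · exact .inr ⟨x, hy⟩
      · exact .inl (List.mem_cons_of_mem x hz)
    · obtain ⟨m', hm', rfl⟩ := Option.map_eq_some_iff.1 h
      rcases List.mem_cons.1 hz with rfl | hz
      · exact .inl List.mem_cons_self
      · exact (ih hm' hz).imp_left (List.mem_cons_of_mem x)

theorem fst_le_of_fBox_eq_some (ha : a ≤ n) {x y : DLetter} (h : fBox n a x = some y) :
    y.1 ≤ a + 1 := by
  simp only [fBox, if_pos ha] at h
  split_ifs at h <;> cases h <;> simp

theorem fst_le_of_eBox_eq_some (ha : a ≤ n) {x y : DLetter} (h : eBox n a x = some y) :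
    y.1 ≤ a + 1 := by
  simp only [eBox, if_pos ha] at h
  split_ifs at h <;> cases h <;> simp

theorem noSpinLetter_of_fList_eq_some (ha : a < n) {l m : List DLetter}
    (hl : NoSpinLetter n l) (h : fList n a l = some m) : NoSpinLetter n m := fun z hz =>
  (mem_of_fList_eq_some h hz).elim (hl z) fun ⟨_, hx⟩ =>
    by have := fst_le_of_fBox_eq_some ha.le hx; omega

theorem noSpinLetter_of_eList_eq_some (ha : a < n) {l m : List DLetter}
    (hl : NoSpinLetter n l) (h : eList n a l = some m) : NoSpinLetter n m := fun z hz =>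
  (mem_of_eList_eq_some h hz).elim (hl z) fun ⟨_, hx⟩ =>
    by have := fst_le_of_eBox_eq_some ha.le hx; omega

theorem sameSignature_self {x : DLetter} (hx : x.1 ≠ n + 1) : SameSignature n n (n + 1) x x := by
  obtain ⟨k, _ | _⟩ := x <;>
    simp_all [SameSignature, phiBox, epsBox, fBox, eBox]

theorem forall₂_sameSignature_self {l : List DLetter} (hl : NoSpinLetter n l) :
    List.Forall₂ (SameSignature n n (n + 1)) l l :=
  List.forall₂_same.2 fun x hx => sameSignature_self (hl x hx)

end Crystal

section Spin

variable {n : ℕ}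

theorem fList_spin_of_fList_eq_some {l m : List DLetter} (hl : NoSpinLetter n l)
    (h : fList n n l = some m) :
    List.Forall₂ (SameSignature n n (n + 1)) l m ∧
      ∃ l', fList n (n + 1) m = some l' ∧ NoSpinLetter n l' := by
  induction l generalizing m with
  | nil => simp [fList] at h
  | cons x xs ih =>
    obtain ⟨hx, hxs⟩ := List.forall_mem_cons.1 hl
    simp only [fList] at h
    split_ifs at h with hc
    · obtain ⟨y, hy, rfl⟩ := Option.map_eq_some_iff.1 h
      obtain ⟨rfl, rfl⟩ : x = (n, false) ∧ y = (n + 1, false) := by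
        obtain ⟨k, _ | _⟩ := x <;> simp_all [fBox]
      have hsig : SameSignature n n (n + 1) (n, false) (n + 1, false) := by
        simp [SameSignature, phiBox, epsBox, fBox, eBox]
      have hself := forall₂_sameSignature_self hxs
      refine ⟨.cons hsig hself, (n, true) :: xs, ?_, ?_⟩
      · rw [phiList_eq_of_forall₂ hself, hsig.2] at hc
        simp [fList, hc, fBox]
      · exact List.forall_mem_cons.2 ⟨by simp, hxs⟩
    · obtain ⟨m', hm', rfl⟩ := Option.map_eq_some_iff.1 h
      obtain ⟨hsig, l', hl', hns⟩ := ih hxs hm'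
      have hself := sameSignature_self hx
      refine ⟨.cons hself hsig, x :: l', ?_, List.forall_mem_cons.2 ⟨hx, hns⟩⟩
      rw [phiList_eq_of_forall₂ hsig, hself.2] at hc
      simp [fList, hc, hl']

theorem eList_spin_of_eList_eq_some {l m : List DLetter} (hl : NoSpinLetter n l)
    (h : eList n n l = some m) :
    List.Forall₂ (SameSignature n n (n + 1)) l m ∧
      ∃ l', eList n (n + 1) m = some l' ∧ NoSpinLetter n l' := by
  induction l generalizing m with
  | nil => simp [eList] at h
  | cons x xs ih =>
    obtain ⟨hx, hxs⟩ := List.forall_mem_cons.1 hl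
    simp only [eList] at h
    split_ifs at h with hc
    · obtain ⟨y, hy, rfl⟩ := Option.map_eq_some_iff.1 h
      obtain ⟨rfl, rfl⟩ : x = (n, true) ∧ y = (n + 1, true) := by
        obtain ⟨k, _ | _⟩ := x <;> simp_all [eBox]
      have hsig : SameSignature n n (n + 1) (n, true) (n + 1, true) := by
        simp [SameSignature, phiBox, epsBox, fBox, eBox]
      have hself := forall₂_sameSignature_self hxs
      refine ⟨.cons hsig hself, (n, false) :: xs, ?_, ?_⟩
      · rw [phiList_eq_of_forall₂ hself, hsig.2] at hc
        simp [eList, hc, eBox]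
      · exact List.forall_mem_cons.2 ⟨by simp, hxs⟩
    · obtain ⟨m', hm', rfl⟩ := Option.map_eq_some_iff.1 h
      obtain ⟨hsig, l', hl', hns⟩ := ih hxs hm'
      have hself := sameSignature_self hx
      refine ⟨.cons hself hsig, x :: l', ?_, List.forall_mem_cons.2 ⟨hx, hns⟩⟩
      rw [phiList_eq_of_forall₂ hsig, hself.2] at hc
      simp [eList, hc, hl']

end Spin

section Virtual

variable {n a : ℕ} {l l' : List DLetter}

theorem noSpinLetter_of_fVirtB_eq_some (ha : a ≤ n) (hl : NoSpinLetter n l)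
    (h : fVirtB n a l = some l') : NoSpinLetter n l' := by
  rcases ha.lt_or_eq with hlt | rfl
  · obtain ⟨m, hm, hm'⟩ := Option.bind_eq_some_iff.1 (by simpa only [fVirtB, if_pos hlt] using h)
    exact noSpinLetter_of_fList_eq_some hlt (noSpinLetter_of_fList_eq_some hlt hl hm) hm'
  · obtain ⟨m, hm, hm'⟩ :=
      Option.bind_eq_some_iff.1 (by simpa only [fVirtB, lt_irrefl, if_false] using h)
    obtain ⟨-, l'', hl'', hns⟩ := fList_spin_of_fList_eq_some hl hm
    exact Option.some_injective _ (hm'.symm.trans hl'') ▸ hns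

theorem noSpinLetter_of_eVirtB_eq_some (ha : a ≤ n) (hl : NoSpinLetter n l)
    (h : eVirtB n a l = some l') : NoSpinLetter n l' := by
  rcases ha.lt_or_eq with hlt | rfl
  · obtain ⟨m, hm, hm'⟩ := Option.bind_eq_some_iff.1 (by simpa only [eVirtB, if_pos hlt] using h)
    exact noSpinLetter_of_eList_eq_some hlt (noSpinLetter_of_eList_eq_some hlt hl hm) hm'
  · obtain ⟨m, hm, hm'⟩ :=
      Option.bind_eq_some_iff.1 (by simpa only [eVirtB, lt_irrefl, if_false] using h)
    obtain ⟨-, l'', hl'', hns⟩ := eList_spin_of_eList_eq_some hl hm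
    exact Option.some_injective _ (hm'.symm.trans hl'') ▸ hns

end Virtual

theorem noSpinLetter_closed_B_general (n : ℕ) (a : ℕ) (ha' : a ≤ n)
    (l l' : List DLetter) (hl : NoSpinLetter n l) :
    (fVirtB n a l = some l' → NoSpinLetter n l') ∧
      (eVirtB n a l = some l' → NoSpinLetter n l') :=
  ⟨noSpinLetter_of_fVirtB_eq_some ha' hl, noSpinLetter_of_eVirtB_eq_some ha' hl⟩

/-- For the folding `Bₙ ↪ D_{n+1}` (with `γ_a = 2` for `a < n` and `γ_n = 1`),
since `f_n^v = f̂_n f̂_{n+1}` sends `n` directly to `n̄` (through `n+1` or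
`(n+1)‾` as an intermediate that is immediately removed), the set of type
`D_{n+1}` words with no occurrence of the letters `n+1` or `(n+1)‾` is closed
under all virtual crystal operators `f_a^v` and `e_a^v`, `1 ≤ a ≤ n`. -/
theorem noSpinLetter_closed_B (n : ℕ) (hn : 2 ≤ n) (a : ℕ) (ha : 1 ≤ a) (ha' : a ≤ n)
    (l l' : List DLetter) (hl : NoSpinLetter n l) :
    (fVirtB n a l = some l' → NoSpinLetter n l') ∧
      (eVirtB n a l = some l' → NoSpinLetter n l') :=
  noSpinLetter_closed_B_general n a ha' l l' hl
end
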